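/- The ∇-weighted number of maximal chains in the weak order on S_n equals N!: that is, m_∇(ε, w₀) = N!, i.e., the sum over all reduced words w₀ = s_{a_1} s_{a_2} ⋯ s_{a_N} of the products a_1 a_2 ⋯ a_N equals N!. -/

import Mathlib

open Equiv Finset MvPolynomial

/-- The length (number of inversions) of a permutation `w`:
`ℓ(w) = #{(a,b) : a < b, w(a) > w(b)}`. -/
def permLen {n : ℕ} (w : Equiv.Perm (Fin n)) : ℕ :=
  (Finset.univ.filter fun p : Fin n × Fin n => p.1 < p.2 ∧ w p.2 < w p.1).card

/-- The longest element `w₀` of the symmetric group, `w₀(a) = n + 1 - a` (one-based). -/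
def longest (n : ℕ) : Equiv.Perm (Fin n) := Fin.revPerm

/-- The element `i` of `Fin n`, for `i : Fin (n-1)`. -/
def fa {n : ℕ} (i : Fin (n - 1)) : Fin n := ⟨(i : ℕ), by have := i.isLt; omega⟩

/-- The element `i + 1` of `Fin n`, for `i : Fin (n-1)`. -/
def fb {n : ℕ} (i : Fin (n - 1)) : Fin n := ⟨(i : ℕ) + 1, by have := i.isLt; omega⟩

/-- The simple transposition `sᵢ` exchanging positions `i` and `i+1`
(zero-based; it is `s_{i+1}` in the one-based indexing of the paper). -/
def sgen {n : ℕ} (i : Fin (n - 1)) : Equiv.Perm (Fin n) := Equiv.swap (fa i) (fb i)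

/-- The Lehmer code of `w`: `code(w)ᵢ = #{j > i : w(j) < w(i)}`. -/
def permCode {n : ℕ} (w : Equiv.Perm (Fin n)) (i : Fin n) : ℕ :=
  (Finset.univ.filter fun j => i < j ∧ w j < w i).card

/-- The Manhattan distance between the Lehmer codes of `u` and `v`;
for a strong Bruhat cover `w ⋖ wt` this is the code weight `c(w, wt)`. -/
def codeDist {n : ℕ} (u v : Equiv.Perm (Fin n)) : ℕ :=
  ∑ i : Fin n, Nat.dist (permCode u i) (permCode v i)

/-- The weighted adjacency matrix of the weak order: entry `(u, v)` is the ∇-weight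
(the one-based index `i`) if `v = u sᵢ` is a weak-order cover of `u`, and `0` otherwise. -/
def nablaMat (n : ℕ) : Matrix (Equiv.Perm (Fin n)) (Equiv.Perm (Fin n)) ℕ :=
  Matrix.of fun u v =>
    ∑ i : Fin (n - 1), if v = u * sgen i ∧ permLen v = permLen u + 1 then (i : ℕ) + 1 else 0

/-- `mNabla n u v` is the ∇-weighted number of saturated weak-order chains from `u` to `v`:
the `(u, v)` entry of the `(ℓ(v) - ℓ(u))`-th power of the weighted weak-order adjacency
matrix.  (Since every cover raises length by exactly one, walks of length `ℓ(v) - ℓ(u)`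
from `u` to `v` are exactly the saturated chains.) -/
def mNabla (n : ℕ) (u v : Equiv.Perm (Fin n)) : ℕ :=
  (nablaMat n ^ (permLen v - permLen u)) u v

/-- The weighted adjacency matrix of the strong Bruhat order with the code weights:
entry `(u, v)` is `c(u, v)` if `v = u t` is a strong cover of `u` (`t` a transposition),
and `0` otherwise. -/
def deltaMat (n : ℕ) : Matrix (Equiv.Perm (Fin n)) (Equiv.Perm (Fin n)) ℕ :=
  Matrix.of fun u v =>
    if (∃ p : Fin n × Fin n, p.1 < p.2 ∧ v = u * Equiv.swap p.1 p.2) ∧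
        permLen v = permLen u + 1
    then codeDist u v else 0

/-- `mDelta n u v` is the code-weighted number of saturated strong-order chains
from `u` to `v`. -/
def mDelta (n : ℕ) (u v : Equiv.Perm (Fin n)) : ℕ :=
  (deltaMat n ^ (permLen v - permLen u)) u v

/-- The weighted adjacency matrix of the strong Bruhat order with the Chevalley weights:
entry `(u, v)` is `j - i` if `v = u t_{ij}` (`i < j`) is a strong cover of `u`,
and `0` otherwise. -/
def chevMat (n : ℕ) : Matrix (Equiv.Perm (Fin n)) (Equiv.Perm (Fin n)) ℕ :=
  Matrix.of fun u v =>
    ∑ p : Fin n × Fin n,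
      if p.1 < p.2 ∧ v = u * Equiv.swap p.1 p.2 ∧ permLen v = permLen u + 1
      then (p.2 : ℕ) - (p.1 : ℕ) else 0

/-- `mChev n u v` is the Chevalley-weighted number of saturated strong-order chains
from `u` to `v`. -/
def mChev (n : ℕ) (u v : Equiv.Perm (Fin n)) : ℕ :=
  (chevMat n ^ (permLen v - permLen u)) u v

/-! Fomin–Stanley's nilCoxeter argument. The weak-order cover matrices `eᵢ` (`eᵢ u v = 1` iff
`v = u sᵢ` covers `u`) satisfy the nilCoxeter relations, so the factors `hᵢ(x) = 1 + x eᵢ` satisfy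
the Yang–Baxter equation, and the staircase product
`G(x) = A₁(x) ⋯ A_{n-1}(x)`, `A_k(x) = h_{k-1}(x) ⋯ h₀(x)`, satisfies `G(x) G(y) = G(x + y)`.
Expanding `G(x) = ∑ xᵏ Cₖ` and comparing the coefficients of `x yᵏ` gives
`C₁ Cₖ = (k + 1) Cₖ₊₁`, hence `C₁ᴺ = N! C_N`. The staircase word is a reduced word of `w₀`, so
`C_N = e_{w₀}`, while `C₁ = ∑ (n - 1 - i) eᵢ`. Running the argument with `eᵢ` replaced by
`e_{n-2-i}` (conjugation by `w₀`, which preserves the relations and `w₀`) turns `C₁` into the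
∇-weighted matrix `∑ (i + 1) eᵢ`, whose `N`-th power therefore has `(ε, w₀)` entry `N!`. -/

def ladderWord (k : ℕ) : List ℕ := (List.range k).reverse

def stairWord : ℕ → List ℕ
  | 0 => []
  | m + 1 => stairWord m ++ ladderWord (m + 1)

section Words

lemma ladderWord_succ (k : ℕ) : ladderWord (k + 1) = k :: ladderWord k := by
  simp [ladderWord, List.range_succ]

lemma lt_of_mem_ladderWord {a k : ℕ} (h : a ∈ ladderWord k) : a < k := by
  simpa [ladderWord] using h

lemma lt_of_mem_stairWord {a m : ℕ} (h : a ∈ stairWord m) : a < m := by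
  induction m with
  | zero => simp [stairWord] at h
  | succ m ih =>
    rcases List.mem_append.1 h with h | h
    · exact (ih h).trans m.lt_succ_self
    · exact lt_of_mem_ladderWord h

lemma two_mul_length_stairWord (m : ℕ) : 2 * (stairWord m).length = m * (m + 1) := by
  induction m with
  | zero => rfl
  | succ m ih =>
    rw [stairWord, List.length_append, ladderWord, List.length_reverse, List.length_range]
    linear_combination ih

variable {M : Type*} [AddCommMonoid M] (f : ℕ → M)

lemma sum_map_ladderWord (k : ℕ) : ((ladderWord k).map f).sum = ∑ i ∈ range k, f i := by
  induction k with
  | zero => rfl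
  | succ k ih => rw [ladderWord_succ, List.map_cons, List.sum_cons, ih, sum_range_succ, add_comm]

lemma sum_map_stairWord (m : ℕ) : ((stairWord m).map f).sum = ∑ i ∈ range m, (m - i) • f i := by
  induction m with
  | zero => rfl
  | succ m ih =>
    rw [stairWord, List.map_append, List.sum_append, ih, sum_map_ladderWord, sum_range_succ,
      sum_range_succ, Nat.add_sub_cancel_left, one_smul, ← add_assoc, ← sum_add_distrib]
    congr 1
    refine sum_congr rfl fun i hi => ?_
    rw [← succ_nsmul, show m - i + 1 = m + 1 - i by have := mem_range.1 hi; omega]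

end Words

section NilCoxeter

variable {A : Type*} [Semiring A]

structure IsNilCoxeter (e : ℕ → A) : Prop where
  mul_self : ∀ a, e a * e a = 0
  comm : ∀ a b, a + 2 ≤ b → e a * e b = e b * e a
  braid : ∀ a, e a * e (a + 1) * e a = e (a + 1) * e a * e (a + 1)

lemma IsNilCoxeter.commute {e : ℕ → A} (he : IsNilCoxeter e) {a b : ℕ}
    (hab : a + 2 ≤ b ∨ b + 2 ≤ a) : Commute (e a) (e b) := by
  rcases hab with hab | hab
  · exact he.comm a b hab
  · exact (he.comm b a hab).symm

def mirror (m : ℕ) (e : ℕ → A) (a : ℕ) : A := if a < m then e (m - 1 - a) else 0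

lemma isNilCoxeter_mirror {e : ℕ → A} (he : IsNilCoxeter e) (m : ℕ) :
    IsNilCoxeter (mirror m e) where
  mul_self a := by unfold mirror; split_ifs <;> simp [he.mul_self]
  comm a b hab := by
    unfold mirror
    by_cases hb : b < m
    · rw [if_pos (by omega), if_pos hb]
      exact (he.comm _ _ (by omega)).symm
    · simp [hb]
  braid a := by
    unfold mirror
    by_cases h : a + 1 < m
    · rw [if_pos (by omega), if_pos h, show m - 1 - a = m - 1 - (a + 1) + 1 by omega]
      exact (he.braid _).symm
    · rw [if_neg h]; simp

end NilCoxeter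

section YangBaxter

variable {K A : Type*} [CommRing K] [Ring A] [Algebra K A]

lemma one_add_smul_mul_one_add_smul {a : A} (ha : a * a = 0) (x y : K) :
    (1 + x • a) * (1 + y • a) = 1 + (x + y) • a := by
  simp only [mul_add, add_mul, one_mul, mul_one, smul_mul_smul, ha, smul_zero, add_smul]
  abel

lemma one_add_smul_yangBaxter {a b : A} (ha : a * a = 0) (hb : b * b = 0)
    (hab : a * b * a = b * a * b) (x y : K) :
    (1 + x • a) * (1 + (x + y) • b) * (1 + y • a)
      = (1 + y • b) * (1 + (x + y) • a) * (1 + x • b) := by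
  have hab' : a * (b * a) = b * (a * b) := by rw [← mul_assoc, hab, mul_assoc]
  simp only [mul_add, add_mul, one_mul, mul_one, smul_mul_assoc, mul_smul_comm,
    mul_assoc, ha, hb, hab', smul_zero, add_zero]
  module

variable (e : ℕ → A)

def hFactor (x : K) (a : ℕ) : A := 1 + x • e a

def wordProd (x : K) (l : List ℕ) : A := (l.map (hFactor e x)).prod

variable {e}

lemma wordProd_cons (x : K) (a : ℕ) (l : List ℕ) :
    wordProd e x (a :: l) = hFactor e x a * wordProd e x l := List.prod_cons

lemma wordProd_ladderWord_succ (x : K) (k : ℕ) :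
    wordProd e x (ladderWord (k + 1)) = hFactor e x k * wordProd e x (ladderWord k) := by
  rw [ladderWord_succ, wordProd_cons]

lemma wordProd_stairWord_succ (x : K) (m : ℕ) :
    wordProd e x (stairWord (m + 1))
      = wordProd e x (stairWord m) * wordProd e x (ladderWord (m + 1)) := by
  simp [wordProd, stairWord]

namespace IsNilCoxeter

lemma hFactor_mul_hFactor (he : IsNilCoxeter e) (x y : K) (a : ℕ) :
    hFactor e x a * hFactor e y a = hFactor e (x + y) a :=
  one_add_smul_mul_one_add_smul (he.mul_self a) x y

lemma commute_hFactor (he : IsNilCoxeter e) {a b : ℕ} (hab : a + 2 ≤ b ∨ b + 2 ≤ a) (x y : K) :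
    Commute (hFactor e x a) (hFactor e y b) :=
  (Commute.one_left _).add_left
    (((Commute.one_right _).add_right ((he.commute hab).smul_right y)).smul_left x)

lemma hFactor_yangBaxter (he : IsNilCoxeter e) (x y : K) (a : ℕ) :
    hFactor e x (a + 1) * hFactor e (x + y) a * hFactor e y (a + 1)
      = hFactor e y a * hFactor e (x + y) (a + 1) * hFactor e x a :=
  one_add_smul_yangBaxter (he.mul_self _) (he.mul_self _) (he.braid a).symm x y

lemma commute_hFactor_wordProd (he : IsNilCoxeter e) {a : ℕ} {l : List ℕ}
    (hl : ∀ b ∈ l, b + 2 ≤ a) (x y : K) : Commute (hFactor e x a) (wordProd e y l) :=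
  Commute.list_prod_right _ _ fun _ hmem => by
    obtain ⟨b, hb, rfl⟩ := List.mem_map.1 hmem
    exact he.commute_hFactor (Or.inr (hl b hb)) x y

lemma hFactor_mul_ladder_mul_ladder (he : IsNilCoxeter e) (x y : K) (k : ℕ) :
    hFactor e x k * wordProd e (x + y) (ladderWord k) * wordProd e y (ladderWord (k + 1))
      = wordProd e y (ladderWord k) * wordProd e (x + y) (ladderWord (k + 1)) := by
  induction k with
  | zero => simp [ladderWord, wordProd, he.hFactor_mul_hFactor]
  | succ k ih =>
    have hc : ∀ z w : K, Commute (hFactor e z (k + 1)) (wordProd e w (ladderWord k)) :=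
      he.commute_hFactor_wordProd fun b hb => by have := lt_of_mem_ladderWord hb; omega
    simp only [wordProd_ladderWord_succ] at ih ⊢
    calc hFactor e x (k + 1) * (hFactor e (x + y) k * wordProd e (x + y) (ladderWord k)) *
          (hFactor e y (k + 1) * (hFactor e y k * wordProd e y (ladderWord k)))
        = hFactor e x (k + 1) * hFactor e (x + y) k * hFactor e y (k + 1) *
          (wordProd e (x + y) (ladderWord k) * (hFactor e y k * wordProd e y (ladderWord k))) := by
          simp only [mul_assoc, (hc y (x + y)).left_comm]
      _ = hFactor e y k * hFactor e (x + y) (k + 1) *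
          (hFactor e x k * wordProd e (x + y) (ladderWord k) *
            (hFactor e y k * wordProd e y (ladderWord k))) := by
          rw [he.hFactor_yangBaxter]; simp only [mul_assoc]
      _ = hFactor e y k * wordProd e y (ladderWord k) *
          (hFactor e (x + y) (k + 1) *
            (hFactor e (x + y) k * wordProd e (x + y) (ladderWord k))) := by
          rw [ih]; simp only [mul_assoc, (hc (x + y) y).left_comm]

lemma ladder_mul_stair_mul_ladder (he : IsNilCoxeter e) (x y : K) (k : ℕ) :
    wordProd e x (ladderWord (k + 1)) * wordProd e y (stairWord k) *
        wordProd e y (ladderWord (k + 1))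
      = wordProd e y (stairWord k) * wordProd e (x + y) (ladderWord (k + 1)) := by
  induction k with
  | zero => simp [ladderWord, stairWord, wordProd, he.hFactor_mul_hFactor]
  | succ k ih =>
    have hc : Commute (hFactor e x (k + 1)) (wordProd e y (stairWord k)) :=
      he.commute_hFactor_wordProd (fun b hb => by have := lt_of_mem_stairWord hb; omega) x y
    calc wordProd e x (ladderWord (k + 2)) * wordProd e y (stairWord (k + 1)) *
          wordProd e y (ladderWord (k + 2))
        = hFactor e x (k + 1) * (wordProd e x (ladderWord (k + 1)) * wordProd e y (stairWord k) *
          wordProd e y (ladderWord (k + 1))) * wordProd e y (ladderWord (k + 2)) := by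
          rw [wordProd_ladderWord_succ _ (k + 1), wordProd_stairWord_succ]; simp only [mul_assoc]
      _ = wordProd e y (stairWord k) * (hFactor e x (k + 1) *
          wordProd e (x + y) (ladderWord (k + 1)) * wordProd e y (ladderWord (k + 2))) := by
          rw [ih]; simp only [mul_assoc, hc.left_comm]
      _ = wordProd e y (stairWord (k + 1)) * wordProd e (x + y) (ladderWord (k + 2)) := by
          rw [he.hFactor_mul_ladder_mul_ladder, wordProd_stairWord_succ, mul_assoc]

lemma stair_mul_stair (he : IsNilCoxeter e) (x y : K) (m : ℕ) :
    wordProd e x (stairWord m) * wordProd e y (stairWord m) = wordProd e (x + y) (stairWord m) := by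
  induction m with
  | zero => simp [stairWord, wordProd]
  | succ m ih =>
    simp only [wordProd_stairWord_succ]
    rw [mul_assoc, ← mul_assoc _ (wordProd e y _), he.ladder_mul_stair_mul_ladder, ← mul_assoc,
      ih]

end IsNilCoxeter

end YangBaxter

section Subwords

variable {K A : Type*} [CommRing K] [Ring A] [Algebra K A] (e : ℕ → A)

def subwordSum : List ℕ → ℕ → A
  | _, 0 => 1
  | [], _ + 1 => 0
  | a :: l, k + 1 => subwordSum l (k + 1) + e a * subwordSum l k

@[simp]
lemma subwordSum_zero (l : List ℕ) : subwordSum e l 0 = 1 := by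
  cases l <;> rfl

lemma subwordSum_of_length_lt : ∀ {l : List ℕ} {k : ℕ}, l.length < k → subwordSum e l k = 0
  | [], _ + 1, _ => rfl
  | a :: l, k + 1, h => by
    simp only [List.length_cons] at h
    rw [subwordSum, subwordSum_of_length_lt (by omega), subwordSum_of_length_lt (by omega),
      mul_zero, add_zero]

lemma subwordSum_one (l : List ℕ) : subwordSum e l 1 = (l.map e).sum := by
  induction l with
  | nil => rfl
  | cons a l ih =>
    rw [subwordSum, ih, subwordSum_zero, mul_one, List.map_cons, List.sum_cons, add_comm]

lemma subwordSum_length : ∀ l : List ℕ, subwordSum e l l.length = (l.map e).prod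
  | [] => rfl
  | a :: l => by
    rw [List.length_cons, subwordSum, subwordSum_of_length_lt e (by omega), subwordSum_length l,
      zero_add, List.map_cons, List.prod_cons]

lemma wordProd_eq_sum_subwordSum (x : K) (l : List ℕ) :
    wordProd e x l = ∑ k ∈ range (l.length + 1), x ^ k • subwordSum e l k := by
  induction l with
  | nil => simp [wordProd]
  | cons a l ih =>
    have htop : subwordSum e l (l.length + 1) = 0 := subwordSum_of_length_lt e (by omega)
    have hshift : ∑ k ∈ range (l.length + 1), x ^ k • subwordSum e l k
        = ∑ k ∈ range (l.length + 1), x ^ (k + 1) • subwordSum e l (k + 1) + 1 := by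
      rw [Finset.sum_range_succ (fun k => x ^ (k + 1) • subwordSum e l (k + 1)), htop, smul_zero,
        add_zero, Finset.sum_range_succ', pow_zero, one_smul, subwordSum_zero]
    have hmul : (x • e a) * ∑ k ∈ range (l.length + 1), x ^ k • subwordSum e l k
        = ∑ k ∈ range (l.length + 1), x ^ (k + 1) • (e a * subwordSum e l k) := by
      simp only [Finset.mul_sum, smul_mul_smul, pow_succ']
    rw [wordProd_cons, ih, hFactor, add_mul, one_mul, hmul, hshift, List.length_cons,
      Finset.sum_range_succ' _ (l.length + 1)]
    simp only [subwordSum, smul_add, Finset.sum_add_distrib, pow_zero, one_smul]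
    abel

lemma subwordSum_one_stairWord_mirror (m : ℕ) :
    subwordSum (mirror m e) (stairWord m) 1 = ∑ i ∈ range m, (i + 1) • e i := by
  rw [subwordSum_one, sum_map_stairWord, ← sum_range_reflect]
  refine sum_congr rfl fun i hi => ?_
  have := mem_range.1 hi
  rw [mirror, if_pos (by omega), show m - (m - 1 - i) = i + 1 by omega,
    show m - 1 - (m - 1 - i) = i by omega]

lemma subwordSum_length_stairWord_mirror (m : ℕ) :
    subwordSum (mirror m e) (stairWord m) (stairWord m).length
      = (((stairWord m).map fun a => m - 1 - a).map e).prod := by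
  rw [subwordSum_length, List.map_map]
  exact congrArg List.prod (List.map_congr_left fun a ha => if_pos (lt_of_mem_stairWord ha))

end Subwords

section Extraction

open Polynomial

variable {K : Type*} [Field K] [Infinite K]

lemma eq_mul_of_forall_sum_mul_eq {M : ℕ} (c : ℕ → ℕ → K) (d : ℕ → K)
    (h : ∀ x y : K, ∑ j ∈ range M, ∑ k ∈ range M, x ^ j * y ^ k * c j k
      = ∑ m ∈ range M, (x + y) ^ m * d m)
    {k : ℕ} (hk : k + 1 < M) : c 1 k = (k + 1) * d (k + 1) := by
  have coeff_sum : ∀ (s : ℕ → K) (i : ℕ), i < M →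
      (∑ j ∈ range M, Polynomial.C (s j) * Polynomial.X ^ j).coeff i = s i := fun s i hi => by
    simp only [finsetSum_coeff, coeff_C_mul_X_pow, Finset.sum_ite_eq, Finset.mem_range, if_pos hi]
  have eval_sum : ∀ (s : ℕ → K) (x : K),
      (∑ j ∈ range M, Polynomial.C (s j) * Polynomial.X ^ j).eval x = ∑ j ∈ range M, s j * x ^ j :=
    fun s x => by
      simp only [eval_finsetSum, Polynomial.eval_mul, Polynomial.eval_C, Polynomial.eval_pow,
        Polynomial.eval_X]
  set q : K[X] := ∑ m ∈ range M, Polynomial.C (d m) * Polynomial.X ^ m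
  have hrow : ∀ y, ∑ k ∈ range M, c 1 k * y ^ k = q.derivative.eval y := by
    intro y
    have hpoly : ∑ j ∈ range M, Polynomial.C (∑ k ∈ range M, c j k * y ^ k) * Polynomial.X ^ j
        = taylor y q := by
      refine Polynomial.funext fun x => ?_
      rw [eval_sum, taylor_eval, eval_sum]
      calc ∑ j ∈ range M, (∑ k ∈ range M, c j k * y ^ k) * x ^ j
          = ∑ j ∈ range M, ∑ k ∈ range M, x ^ j * y ^ k * c j k := by
            simp only [Finset.sum_mul]
            exact Finset.sum_congr rfl fun j _ => Finset.sum_congr rfl fun k _ => by ring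
        _ = ∑ m ∈ range M, d m * (x + y) ^ m := by
            rw [h x y]; exact Finset.sum_congr rfl fun _ _ => mul_comm _ _
    -- the coefficient of `x` in `q (x + y)` is `q' y`
    rw [← taylor_coeff_one, ← hpoly, coeff_sum _ 1 (by omega)]
  have hderiv : ∑ k ∈ range M, Polynomial.C (c 1 k) * Polynomial.X ^ k = derivative q :=
    Polynomial.funext fun y => by rw [eval_sum, hrow]
  have hcoeff := congrArg (Polynomial.coeff · k) hderiv
  have hq : q.coeff (k + 1) = d (k + 1) := coeff_sum _ _ hk
  simp only [coeff_derivative, coeff_sum _ _ (by omega : k < M), hq] at hcoeff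
  rw [hcoeff, mul_comm]

lemma eq_nsmul_of_forall_sum_smul_eq {V : Type*} [AddCommGroup V] [Module K V] {M : ℕ}
    (c : ℕ → ℕ → V) (d : ℕ → V)
    (h : ∀ x y : K, ∑ j ∈ range M, ∑ k ∈ range M, (x ^ j * y ^ k) • c j k
      = ∑ m ∈ range M, (x + y) ^ m • d m)
    {k : ℕ} (hk : k + 1 < M) : c 1 k = (k + 1) • d (k + 1) := by
  rw [← sub_eq_zero, ← Module.forall_dual_apply_eq_zero_iff K]
  intro φ
  have hφ := eq_mul_of_forall_sum_mul_eq (fun j k => φ (c j k)) (fun m => φ (d m))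
    (fun x y => by simpa only [map_sum, map_smul, smul_eq_mul] using congrArg φ (h x y)) hk
  rw [map_sub, map_nsmul, hφ, nsmul_eq_mul, sub_eq_zero]
  push_cast
  ring

end Extraction

section FominStanley

variable {A : Type*} [Ring A] [Algebra ℚ A] {e : ℕ → A}

lemma IsNilCoxeter.subwordSum_one_mul (he : IsNilCoxeter e) (m : ℕ) {k : ℕ}
    (hk : k + 1 ≤ (stairWord m).length) :
    subwordSum e (stairWord m) 1 * subwordSum e (stairWord m) k
      = (k + 1) • subwordSum e (stairWord m) (k + 1) := by
  refine eq_nsmul_of_forall_sum_smul_eq (K := ℚ) (M := (stairWord m).length + 1)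
    (fun j k => subwordSum e (stairWord m) j * subwordSum e (stairWord m) k)
    (subwordSum e (stairWord m)) (fun x y => ?_) (by omega)
  rw [← wordProd_eq_sum_subwordSum, ← he.stair_mul_stair x y, wordProd_eq_sum_subwordSum,
    wordProd_eq_sum_subwordSum, Finset.sum_mul_sum]
  simp only [smul_mul_smul]

lemma IsNilCoxeter.subwordSum_one_pow (he : IsNilCoxeter e) (m : ℕ) {k : ℕ}
    (hk : k ≤ (stairWord m).length) :
    subwordSum e (stairWord m) 1 ^ k = k.factorial • subwordSum e (stairWord m) k := by
  induction k with
  | zero => simp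
  | succ k ih =>
    rw [pow_succ', ih (by omega), mul_smul_comm, he.subwordSum_one_mul m hk, smul_smul,
      Nat.factorial_succ, mul_comm]

end FominStanley

section Permutations

variable {n : ℕ}

def sgenNat (n a : ℕ) : Perm (Fin n) := if h : a < n - 1 then sgen ⟨a, h⟩ else 1

lemma sgenNat_of_fin (i : Fin (n - 1)) : sgenNat n i = sgen i := by
  simp [sgenNat]

lemma val_sgenNat_apply (a : ℕ) (x : Fin n) :
    (sgenNat n a x : ℕ) = if (x : ℕ) = a ∧ a + 1 < n then a + 1
      else if (x : ℕ) = a + 1 then a else x := by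
  have hx := x.isLt
  by_cases h : a < n - 1
  · simp only [sgenNat, h, dite_true, sgen, swap_apply_def, fa, fb, Fin.ext_iff]
    split_ifs <;> simp_all; omega
  · simp only [sgenNat, h, dite_false, Perm.one_apply]
    split_ifs <;> omega

lemma sgenNat_mul_self (a : ℕ) : sgenNat n a * sgenNat n a = 1 := by
  ext x
  simp only [Perm.mul_apply, val_sgenNat_apply, Perm.one_apply]
  split_ifs <;> omega

lemma sgenNat_comm {a b : ℕ} (hab : a + 2 ≤ b) :
    sgenNat n a * sgenNat n b = sgenNat n b * sgenNat n a := by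
  ext x
  simp only [Perm.mul_apply, val_sgenNat_apply]
  split_ifs <;> omega

lemma sgenNat_braid {a : ℕ} (ha : a + 2 < n) :
    sgenNat n a * sgenNat n (a + 1) * sgenNat n a
      = sgenNat n (a + 1) * sgenNat n a * sgenNat n (a + 1) := by
  ext x
  simp only [Perm.mul_apply, val_sgenNat_apply, ha, (by omega : a + 1 < n), and_true]
  split_ifs <;> omega

lemma val_longest_apply (x : Fin n) : (longest n x : ℕ) = n - 1 - x := by
  simp only [longest, Fin.revPerm_apply, Fin.val_rev]
  omega

lemma longest_inv : (longest n)⁻¹ = longest n := by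
  ext x
  simp [longest]

lemma longest_mul_sgenNat_mul_longest {a : ℕ} (ha : a < n - 1) :
    longest n * sgenNat n a * longest n = sgenNat n (n - 2 - a) := by
  ext x
  have hx := x.isLt
  simp only [Perm.mul_apply, val_sgenNat_apply, val_longest_apply]
  split_ifs <;> omega

end Permutations

section Length

variable {n : ℕ}

lemma permLen_one : permLen (1 : Perm (Fin n)) = 0 := by
  rw [permLen]
  exact card_eq_zero.2 (filter_eq_empty_iff.2 fun _ _ h => lt_asymm h.1 h.2)

lemma permLen_longest : permLen (longest n) = n * (n - 1) / 2 := by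
  have hrev : ∀ p : Fin n × Fin n, p.1 < p.2 ∧ longest n p.2 < longest n p.1 ↔ p.1 < p.2 :=
    fun p => by simp [longest, Fin.rev_lt_rev]
  simp only [permLen, hrev, Fintype.card_product_filter_lt, Fintype.card_fin, Nat.choose_two_right]

lemma sgen_lt_sgen_iff (i : Fin (n - 1)) (x y : Fin n) :
    sgen i x < sgen i y ↔ (x < y ∧ ¬(x = fa i ∧ y = fb i)) ∨ (x = fb i ∧ y = fa i) := by
  simp only [← sgenNat_of_fin, Fin.lt_def, Fin.ext_iff, val_sgenNat_apply, fa, fb]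
  have := i.isLt
  split_ifs <;> omega

lemma permLen_mul_sgen_of_lt (w : Perm (Fin n)) (i : Fin (n - 1)) (h : w (fa i) < w (fb i)) :
    permLen (w * sgen i) = permLen w + 1 := by
  have hinv : Function.Involutive (sgen i) := swap_apply_self _ _
  have hreindex : permLen (w * sgen i)
      = #(univ.filter fun q : Fin n × Fin n => sgen i q.1 < sgen i q.2 ∧ w q.2 < w q.1) :=
    Finset.card_equiv ((sgen i).prodCongr (sgen i)) fun p => by
      rw [mem_filter, mem_filter]
      simp only [mem_univ, true_and, Perm.mul_apply, prodCongr_apply, Prod.map_fst, Prod.map_snd,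
        hinv _]
  have hins : univ.filter (fun q : Fin n × Fin n => sgen i q.1 < sgen i q.2 ∧ w q.2 < w q.1)
      = insert (fb i, fa i) (univ.filter fun q : Fin n × Fin n => q.1 < q.2 ∧ w q.2 < w q.1) := by
    ext ⟨x, y⟩
    simp only [mem_filter, mem_univ, true_and, mem_insert, Prod.mk.injEq, sgen_lt_sgen_iff]
    constructor
    · rintro ⟨(⟨hxy, -⟩ | ⟨rfl, rfl⟩), hw⟩
      · exact Or.inr ⟨hxy, hw⟩
      · exact Or.inl ⟨rfl, rfl⟩
    · rintro (⟨rfl, rfl⟩ | ⟨hxy, hw⟩)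
      · exact ⟨Or.inr ⟨rfl, rfl⟩, h⟩
      · refine ⟨Or.inl ⟨hxy, ?_⟩, hw⟩
        rintro ⟨rfl, rfl⟩
        exact lt_asymm h hw
  have hnot : (fb i, fa i) ∉ univ.filter fun q : Fin n × Fin n => q.1 < q.2 ∧ w q.2 < w q.1 := by
    simp only [mem_filter, mem_univ, true_and, not_and]
    intro hlt
    exact absurd (show (i : ℕ) + 1 < i from hlt) (by omega)
  rw [hreindex, hins, card_insert_of_notMem hnot, permLen]

lemma sgen_mul_self (i : Fin (n - 1)) : sgen i * sgen i = 1 := swap_mul_self _ _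

lemma permLen_mul_sgen_le (w : Perm (Fin n)) (i : Fin (n - 1)) :
    permLen (w * sgen i) ≤ permLen w + 1 := by
  rcases lt_or_gt_of_ne (w.injective.ne (show fa i ≠ fb i by simp [fa, fb, Fin.ext_iff]))
    with h | h
  · exact (permLen_mul_sgen_of_lt w i h).le
  · have hw := permLen_mul_sgen_of_lt (w * sgen i) i (by simpa [sgen] using h)
    rw [mul_assoc, sgen_mul_self, mul_one] at hw
    omega

lemma permLen_mul_sgenNat_le (w : Perm (Fin n)) (a : ℕ) :
    permLen (w * sgenNat n a) ≤ permLen w + 1 := by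
  by_cases ha : a < n - 1
  · simpa [sgenNat, ha] using permLen_mul_sgen_le w ⟨a, ha⟩
  · simp [sgenNat, ha]

lemma permLen_mul_list_prod_le (w : Perm (Fin n)) (l : List ℕ) :
    permLen (w * (l.map (sgenNat n)).prod) ≤ permLen w + l.length := by
  induction l generalizing w with
  | nil => simp
  | cons a l ih =>
    rw [List.map_cons, List.prod_cons, ← mul_assoc, List.length_cons]
    have := permLen_mul_sgenNat_le w a
    have := ih (w * sgenNat n a)
    omega

end Length

section LongestWord

variable {n : ℕ}

lemma val_list_prod_ladderWord_apply {k : ℕ} (hk : k < n) (x : Fin n) :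
    (((ladderWord k).map (sgenNat n)).prod x : ℕ)
      = if (x : ℕ) = 0 then k else if (x : ℕ) ≤ k then x - 1 else x := by
  induction k with
  | zero =>
    simp only [ladderWord, List.range_zero, List.reverse_nil, List.map_nil, List.prod_nil,
      Perm.one_apply]
    split_ifs <;> omega
  | succ k ih =>
    rw [ladderWord_succ, List.map_cons, List.prod_cons, Perm.mul_apply, val_sgenNat_apply,
      ih (by omega)]
    split_ifs <;> omega

lemma val_list_prod_stairWord_apply {m : ℕ} (hm : m < n) (x : Fin n) :
    (((stairWord m).map (sgenNat n)).prod x : ℕ) = if (x : ℕ) ≤ m then m - x else x := by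
  induction m generalizing x with
  | zero => simp [stairWord]
  | succ m ih =>
    rw [stairWord, List.map_append, List.prod_append, Perm.mul_apply, ih (by omega),
      val_list_prod_ladderWord_apply hm]
    split_ifs <;> omega

lemma list_prod_stairWord : ((stairWord (n - 1)).map (sgenNat n)).prod = longest n := by
  ext x
  have := x.isLt
  rw [val_list_prod_stairWord_apply (by omega), val_longest_apply]
  split_ifs <;> omega

lemma list_prod_stairWord_mirror :
    (((stairWord (n - 1)).map fun a => n - 1 - 1 - a).map (sgenNat n)).prod = longest n := by
  have hconj : ∀ a ∈ stairWord (n - 1),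
      sgenNat n (n - 1 - 1 - a) = MulAut.conj (longest n) (sgenNat n a) := fun a ha => by
    have := lt_of_mem_stairWord ha
    rw [MulAut.conj_apply, longest_inv, longest_mul_sgenNat_mul_longest this,
      show n - 1 - 1 - a = n - 2 - a by omega]
  rw [List.map_map]
  calc ((stairWord (n - 1)).map fun a => sgenNat n (n - 1 - 1 - a)).prod
      = MulAut.conj (longest n) ((stairWord (n - 1)).map (sgenNat n)).prod := by
        rw [map_list_prod, List.map_map]
        exact congrArg List.prod (List.map_congr_left hconj)
    _ = longest n := by
      rw [list_prod_stairWord, MulAut.conj_apply, mul_inv_cancel_right]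

end LongestWord

section WeakOrderMatrices

variable {R : Type*} [Semiring R] {n : ℕ}

variable (R n) in
def weakCoverMat (a : ℕ) : Matrix (Perm (Fin n)) (Perm (Fin n)) R :=
  Matrix.of fun u v => if v = u * sgenNat n a ∧ permLen v = permLen u + 1 then 1 else 0

lemma weakCoverMat_mul_apply (a : ℕ) (M : Matrix (Perm (Fin n)) (Perm (Fin n)) R)
    (u v : Perm (Fin n)) :
    (weakCoverMat R n a * M) u v
      = if permLen (u * sgenNat n a) = permLen u + 1 then M (u * sgenNat n a) v else 0 := by
  simp [Matrix.mul_apply, weakCoverMat, ite_and]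

lemma list_prod_weakCoverMat_apply (l : List ℕ) (u v : Perm (Fin n)) :
    (l.map (weakCoverMat R n)).prod u v
      = if v = u * (l.map (sgenNat n)).prod ∧ permLen v = permLen u + l.length then 1 else 0 := by
  induction l generalizing u with
  | nil =>
    by_cases h : u = v
    · simp [h]
    · simp [h, Ne.symm h]
  | cons a l ih =>
    rw [List.map_cons, List.prod_cons, weakCoverMat_mul_apply, ih]
    simp only [List.map_cons, List.prod_cons, List.length_cons, ← mul_assoc]
    by_cases hu : permLen (u * sgenNat n a) = permLen u + 1
    · rw [if_pos hu, hu, add_assoc, add_comm 1]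
    · rw [if_neg hu, if_neg]
      rintro ⟨rfl, hv⟩
      have := permLen_mul_list_prod_le (u * sgenNat n a) l
      have := permLen_mul_sgenNat_le u a
      omega

lemma list_prod_weakCoverMat_congr {l l' : List ℕ}
    (hprod : (l.map (sgenNat n)).prod = (l'.map (sgenNat n)).prod) (hlen : l.length = l'.length) :
    (l.map (weakCoverMat R n)).prod = (l'.map (weakCoverMat R n)).prod := by
  ext u v
  rw [list_prod_weakCoverMat_apply, list_prod_weakCoverMat_apply, hprod, hlen]

lemma weakCoverMat_of_le {a : ℕ} (ha : n - 1 ≤ a) : weakCoverMat R n a = 0 := by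
  ext u v
  simp only [weakCoverMat, sgenNat, not_lt.2 ha, dite_false, mul_one, Matrix.of_apply,
    Matrix.zero_apply, ite_eq_right_iff, and_imp]
  rintro rfl
  omega

lemma isNilCoxeter_weakCoverMat : IsNilCoxeter (weakCoverMat R n) where
  mul_self a := by
    ext u v
    have h := list_prod_weakCoverMat_apply (R := R) [a, a] u v
    simp only [List.map_cons, List.map_nil, List.prod_cons, List.prod_nil, mul_one,
      sgenNat_mul_self, List.length_cons, List.length_nil] at h
    rw [h, if_neg fun ⟨hvu, hlen⟩ => by subst hvu; omega, Matrix.zero_apply]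
  comm a b hab := by
    simpa using list_prod_weakCoverMat_congr (R := R) (l := [a, b]) (l' := [b, a])
      (by simpa using sgenNat_comm hab) rfl
  braid a := by
    by_cases ha : a + 2 < n
    · simpa [mul_assoc] using list_prod_weakCoverMat_congr (R := R) (l := [a, a + 1, a])
        (l' := [a + 1, a, a + 1]) (by simpa [mul_assoc] using sgenNat_braid ha) rfl
    · simp [weakCoverMat_of_le (R := R) (show n - 1 ≤ a + 1 by omega)]

lemma nablaMat_map_natCast :
    (nablaMat n).map (Nat.cast : ℕ → R) = ∑ i ∈ range (n - 1), (i + 1) • weakCoverMat R n i := by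
  ext u v
  simp only [nablaMat, Matrix.map_apply, Matrix.of_apply, Nat.cast_sum, Matrix.sum_apply,
    Matrix.smul_apply, weakCoverMat]
  rw [← Fin.sum_univ_eq_sum_range]
  refine Finset.sum_congr rfl fun i _ => ?_
  rw [sgenNat_of_fin]
  split_ifs <;> simp

end WeakOrderMatrices

theorem nabla_maximal_chains_general (n : ℕ) :
    mNabla n 1 (longest n) = Nat.factorial (n * (n - 1) / 2) := by
  set N := n * (n - 1) / 2
  set e := mirror (n - 1) (weakCoverMat ℚ n)
  have hN : (stairWord (n - 1)).length = N := by
    have h := two_mul_length_stairWord (n - 1)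
    have : (n - 1) * (n - 1 + 1) = n * (n - 1) := by cases n <;> simp [mul_comm]
    omega
  have htop : subwordSum e (stairWord (n - 1)) N 1 (longest n) = 1 := by
    rw [← hN, subwordSum_length_stairWord_mirror, list_prod_weakCoverMat_apply, one_mul,
      list_prod_stairWord_mirror, List.length_map, hN, permLen_longest, permLen_one, zero_add]
    exact if_pos ⟨rfl, rfl⟩
  have he : IsNilCoxeter e := isNilCoxeter_mirror isNilCoxeter_weakCoverMat (n - 1)
  have hpow := he.subwordSum_one_pow (n - 1) hN.ge
  rw [subwordSum_one_stairWord_mirror, ← nablaMat_map_natCast] at hpow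
  have hentry := congrFun (congrFun hpow 1) (longest n)
  rw [← Nat.coe_castRingHom, ← RingHom.mapMatrix_apply, ← map_pow, RingHom.mapMatrix_apply,
    Matrix.map_apply, Matrix.smul_apply, htop, nsmul_one] at hentry
  rw [mNabla, permLen_longest, permLen_one, Nat.sub_zero]
  exact Nat.cast_injective hentry

/-- The ∇-weighted number of maximal chains in the weak order on `S_n` equals `N!`,
where `N = n(n-1)/2`: the sum over all reduced words `w₀ = s_{a_1} ⋯ s_{a_N}` of the
products `a_1 a_2 ⋯ a_N` equals `N!`. -/
theorem nabla_maximal_chains (n : ℕ) (hn : 2 ≤ n) :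
    mNabla n 1 (longest n) = Nat.factorial (n * (n - 1) / 2) :=
  nabla_maximal_chains_general n
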